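/- A cut C of an occurrence net N splits N into two nets: N restricted to C⁻ = { x : ∃ s ∈ C, x ≤ s } and N restricted to C⁺ = { x : ∃ s ∈ C, s ≤ x } with initial marking C; moreover C⁻ ∩ C⁺ = C and C⁻ ∪ C⁺ contains every node causally related to some element of C, and both restricted nets are again occurrence nets. -/

import Mathlib

open scoped Classical
noncomputable section

/-- A place/transition Petri net given by an explicit set of places and set of
transitions (within ambient types `α`, `τ`), pre and post multisets and an
initial marking. -/
structure SNet (α τ : Type) where
  places : Set α
  trans : Set τ
  pre : τ → Multiset α
  post : τ → Multiset α
  init : Multiset α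

namespace SNet

variable {α τ : Type}

def fires (N : SNet α τ) (t : τ) (M M' : Multiset α) : Prop :=
  t ∈ N.trans ∧ N.pre t ≤ M ∧ M' = M - N.pre t + N.post t

def step (N : SNet α τ) (M M' : Multiset α) : Prop := ∃ t, N.fires t M M'

def Reaches (N : SNet α τ) : Multiset α → Multiset α → Prop :=
  Relation.ReflTransGen N.step

def Reachable (N : SNet α τ) (M : Multiset α) : Prop := N.Reaches N.init M

/-- The flow relation on nodes (places ⊕ transitions) of the net. -/
def flow (N : SNet α τ) : α ⊕ τ → α ⊕ τ → Prop
  | Sum.inl p, Sum.inr t => p ∈ N.places ∧ t ∈ N.trans ∧ p ∈ N.pre t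
  | Sum.inr t, Sum.inl p => p ∈ N.places ∧ t ∈ N.trans ∧ p ∈ N.post t
  | _, _ => False

def le (N : SNet α τ) (x y : α ⊕ τ) : Prop := Relation.ReflTransGen N.flow x y

def lt (N : SNet α τ) (x y : α ⊕ τ) : Prop := Relation.TransGen N.flow x y

def Conflict (N : SNet α τ) (x y : α ⊕ τ) : Prop :=
  ∃ p ∈ N.places, ∃ t₁ ∈ N.trans, ∃ t₂ ∈ N.trans, t₁ ≠ t₂ ∧
    p ∈ N.pre t₁ ∧ p ∈ N.pre t₂ ∧
    N.le (Sum.inr t₁) x ∧ N.le (Sum.inr t₂) y ∧ Sum.inl p ≠ x ∧ Sum.inl p ≠ y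

def Concurrent (N : SNet α τ) (x y : α ⊕ τ) : Prop :=
  ¬ N.le x y ∧ ¬ N.le y x ∧ ¬ N.Conflict x y

/-- Places of `N` without incoming transitions, `°N`. -/
def minPlaces (N : SNet α τ) : Set α :=
  {p ∈ N.places | ∀ t ∈ N.trans, p ∉ N.post t}

/-- Places of `N` without outgoing transitions, `N°`. -/
def maxPlaces (N : SNet α τ) : Set α :=
  {p ∈ N.places | ∀ t ∈ N.trans, p ∉ N.pre t}

/-- Occurrence net (set-based version). -/
structure IsOccurrence (N : SNet α τ) : Prop where
  pre_nodup : ∀ t ∈ N.trans, (N.pre t).Nodup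
  post_nodup : ∀ t ∈ N.trans, (N.post t).Nodup
  pre_ne : ∀ t ∈ N.trans, N.pre t ≠ 0
  post_ne : ∀ t ∈ N.trans, N.post t ≠ 0
  pre_sub : ∀ t ∈ N.trans, ∀ p ∈ N.pre t, p ∈ N.places
  post_sub : ∀ t ∈ N.trans, ∀ p ∈ N.post t, p ∈ N.places
  unique_pred : ∀ p ∈ N.places, ∀ t₁ ∈ N.trans, ∀ t₂ ∈ N.trans,
    p ∈ N.post t₁ → p ∈ N.post t₂ → t₁ = t₂
  wf : WellFounded (fun x y : α ⊕ τ => N.flow y x)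
  no_self_conflict : ∀ t ∈ N.trans, ¬ N.Conflict (Sum.inr t) (Sum.inr t)
  init_nodup : N.init.Nodup
  init_iff : ∀ p, p ∈ N.init ↔ p ∈ N.minPlaces

/-- A cut: a maximal set of pairwise concurrent places. -/
def IsCut (N : SNet α τ) (C : Set α) : Prop :=
  C ⊆ N.places ∧
  (∀ p ∈ C, ∀ q ∈ C, p ≠ q → N.Concurrent (Sum.inl p) (Sum.inl q)) ∧
  (∀ p ∈ N.places, (∀ q ∈ C, p ≠ q → N.Concurrent (Sum.inl p) (Sum.inl q)) → p ∈ C)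

end SNet

namespace SNet

/-- Restriction `N ↾ X` of `N` to a set `X` of nodes. -/
def restrictNodes {α τ : Type} (N : SNet α τ) (X : Set (α ⊕ τ)) : SNet α τ where
  places := N.places ∩ {p | Sum.inl p ∈ X}
  trans := N.trans ∩ {t | Sum.inr t ∈ X}
  pre := fun t => (N.pre t).filter (fun p => Sum.inl p ∈ X)
  post := fun t => (N.post t).filter (fun p => Sum.inl p ∈ X)
  init := N.init.filter (fun p => Sum.inl p ∈ X)

/-- `N[M]`: the net `N` with its initial marking changed to `M`. -/
def withInit {α τ : Type} (N : SNet α τ) (M : Multiset α) : SNet α τ :=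
  { N with init := M }

end SNet

namespace SNet

variable {α τ : Type}

lemma flow_restrict {N : SNet α τ} {X : Set (α ⊕ τ)} {x y : α ⊕ τ}
    (hxy : (N.restrictNodes X).flow x y) : N.flow x y := by
  cases x with
  | inl p =>
    cases y with
    | inl q => exact hxy.elim
    | inr t =>
      obtain ⟨hp, ht, hpre⟩ := hxy
      exact ⟨hp.1, ht.1, (Multiset.mem_filter.mp hpre).1⟩
  | inr t =>
    cases y with
    | inl p =>
      obtain ⟨hp, ht, hpost⟩ := hxy
      exact ⟨hp.1, ht.1, (Multiset.mem_filter.mp hpost).1⟩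
    | inr t' => exact hxy.elim

lemma le_restrict {N : SNet α τ} {X : Set (α ⊕ τ)} {x y : α ⊕ τ}
    (hxy : (N.restrictNodes X).le x y) : N.le x y :=
  Relation.ReflTransGen.mono (fun _ _ => flow_restrict) x y hxy

lemma conflict_restrict {N : SNet α τ} {X : Set (α ⊕ τ)} {x y : α ⊕ τ}
    (hc : (N.restrictNodes X).Conflict x y) : N.Conflict x y := by
  obtain ⟨p, hp, t₁, ht₁, t₂, ht₂, hne, h1, h2, hl1, hl2, hn1, hn2⟩ := hc
  exact ⟨p, hp.1, t₁, ht₁.1, t₂, ht₂.1, hne, (Multiset.mem_filter.mp h1).1,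
    (Multiset.mem_filter.mp h2).1, le_restrict hl1, le_restrict hl2, hn1, hn2⟩

lemma no_cycle {N : SNet α τ} (h : N.IsOccurrence) {x : α ⊕ τ}
    (hx : Relation.TransGen N.flow x x) : False := by
  have h1 : Relation.TransGen (Function.swap N.flow) x x :=
    Relation.transGen_swap.mpr hx
  have h2 : WellFounded (Relation.TransGen (Function.swap N.flow)) :=
    WellFounded.transGen h.wf
  exact h2.asymmetric x x h1 h1

lemma occ_le_antisymm {N : SNet α τ} (h : N.IsOccurrence) {x y : α ⊕ τ}
    (hxy : N.le x y) (hyx : N.le y x) : x = y := by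
  by_contra hne
  rcases Relation.ReflTransGen.cases_head hxy with heq | ⟨z, hz1, hz2⟩
  · exact hne heq
  · exact no_cycle h ((Relation.TransGen.head' hz1 hz2).trans_right hyx)

/-- Generic restriction lemma. -/
lemma isOccurrence_restrict {N : SNet α τ} (h : N.IsOccurrence) (X : Set (α ⊕ τ))
    (hpre : ∀ t, t ∈ N.trans → Sum.inr t ∈ X → ∃ p ∈ N.pre t, Sum.inl p ∈ X)
    (hpost : ∀ t, t ∈ N.trans → Sum.inr t ∈ X → ∃ p ∈ N.post t, Sum.inl p ∈ X)
    (M : Multiset α) (hM : M.Nodup)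
    (hMiff : ∀ p, p ∈ M ↔ p ∈ ((N.restrictNodes X).withInit M).minPlaces) :
    ((N.restrictNodes X).withInit M).IsOccurrence := by
  refine ⟨?_, ?_, ?_, ?_, ?_, ?_, ?_, ?_, ?_, hM, hMiff⟩
  · exact fun t ht => (h.pre_nodup t ht.1).filter _
  · exact fun t ht => (h.post_nodup t ht.1).filter _
  · intro t ht h0
    obtain ⟨p, hp, hpX⟩ := hpre t ht.1 ht.2
    have : p ∈ (N.pre t).filter (fun p => Sum.inl p ∈ X) :=
      Multiset.mem_filter.mpr ⟨hp, hpX⟩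
    rw [show ((N.restrictNodes X).withInit M).pre t
        = (N.pre t).filter (fun p => Sum.inl p ∈ X) from rfl] at h0
    simp [h0] at this
  · intro t ht h0
    obtain ⟨p, hp, hpX⟩ := hpost t ht.1 ht.2
    have : p ∈ (N.post t).filter (fun p => Sum.inl p ∈ X) :=
      Multiset.mem_filter.mpr ⟨hp, hpX⟩
    rw [show ((N.restrictNodes X).withInit M).post t
        = (N.post t).filter (fun p => Sum.inl p ∈ X) from rfl] at h0
    simp [h0] at this
  · intro t ht p hp
    obtain ⟨hp1, hp2⟩ := Multiset.mem_filter.mp hp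
    exact ⟨h.pre_sub t ht.1 p hp1, hp2⟩
  · intro t ht p hp
    obtain ⟨hp1, hp2⟩ := Multiset.mem_filter.mp hp
    exact ⟨h.post_sub t ht.1 p hp1, hp2⟩
  · intro p hp t₁ ht₁ t₂ ht₂ h1 h2
    exact h.unique_pred p hp.1 t₁ ht₁.1 t₂ ht₂.1
      (Multiset.mem_filter.mp h1).1 (Multiset.mem_filter.mp h2).1
  · exact Subrelation.wf (fun hxy => flow_restrict hxy) h.wf
  · exact fun t ht hc => h.no_self_conflict t ht.1 (conflict_restrict hc)

end SNet

/-- A cut `C` of an occurrence net `N` splits `N` into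
`N ↾ C⁻` and `(N ↾ C⁺)[C]`: moreover `C⁻ ∩ C⁺ = C` (as node sets),
`C⁻ ∪ C⁺` contains every node causally related to some element of `C`, and both
restricted nets are again occurrence nets. -/
theorem stmt11 {α τ : Type} (N : SNet α τ) (h : N.IsOccurrence)
    (C : Set α) (hC : N.IsCut C) (hfin : C.Finite) :
    {x : α ⊕ τ | ∃ s ∈ C, N.le x (Sum.inl s)} ∩
        {x : α ⊕ τ | ∃ s ∈ C, N.le (Sum.inl s) x} = Sum.inl '' C ∧
    (∀ x : α ⊕ τ, (∃ s ∈ C, N.le x (Sum.inl s) ∨ N.le (Sum.inl s) x) →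
      x ∈ {x : α ⊕ τ | ∃ s ∈ C, N.le x (Sum.inl s)} ∪
          {x : α ⊕ τ | ∃ s ∈ C, N.le (Sum.inl s) x}) ∧
    (N.restrictNodes {x : α ⊕ τ | ∃ s ∈ C, N.le x (Sum.inl s)}).IsOccurrence ∧
    ((N.restrictNodes {x : α ⊕ τ | ∃ s ∈ C, N.le (Sum.inl s) x}).withInit
        hfin.toFinset.val).IsOccurrence := by
  set X : Set (α ⊕ τ) := {x : α ⊕ τ | ∃ s ∈ C, N.le x (Sum.inl s)} with hXdef
  set Y : Set (α ⊕ τ) := {x : α ⊕ τ | ∃ s ∈ C, N.le (Sum.inl s) x} with hYdef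
  refine ⟨?_, ?_, ?_, ?_⟩
  · -- C⁻ ∩ C⁺ = C
    ext x
    constructor
    · rintro ⟨⟨s, hs, hxs⟩, ⟨s', hs', hs'x⟩⟩
      have hss : s' = s := by
        by_contra hne
        exact (hC.2.1 s' hs' s hs hne).1 (hs'x.trans hxs)
      subst hss
      have : x = Sum.inl s' := SNet.occ_le_antisymm h hxs hs'x
      exact ⟨s', hs', this.symm⟩
    · rintro ⟨s, hs, rfl⟩
      exact ⟨⟨s, hs, Relation.ReflTransGen.refl⟩, ⟨s, hs, Relation.ReflTransGen.refl⟩⟩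
  · -- union covers
    rintro x ⟨s, hs, hle | hle⟩
    · exact Or.inl ⟨s, hs, hle⟩
    · exact Or.inr ⟨s, hs, hle⟩
  · -- N ↾ C⁻ is an occurrence net
    have key : N.restrictNodes X
        = (N.restrictNodes X).withInit ((N.restrictNodes X).init) := rfl
    rw [key]
    refine SNet.isOccurrence_restrict h X ?_ ?_ _ (h.init_nodup.filter _) ?_
    · -- pre: X down-closed ⇒ all pre-places in X
      intro t ht htX
      obtain ⟨p, hp⟩ := Multiset.exists_mem_of_ne_zero (h.pre_ne t ht)
      obtain ⟨s, hs, hle⟩ := htX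
      refine ⟨p, hp, s, hs, Relation.ReflTransGen.head ?_ hle⟩
      exact ⟨h.pre_sub t ht p hp, ht, hp⟩
    · -- post: first step of path to C
      intro t ht htX
      obtain ⟨s, hs, hle⟩ := htX
      rcases Relation.ReflTransGen.cases_head hle with heq | ⟨z, hz1, hz2⟩
      · simp at heq
      · cases z with
        | inl p => exact ⟨p, hz1.2.2, s, hs, hz2⟩
        | inr t' => exact hz1.elim
    · -- init_iff for C⁻
      intro p
      constructor
      · intro hp
        obtain ⟨hpi, hpX⟩ := Multiset.mem_filter.mp hp
        obtain ⟨hpl, hmin⟩ := (h.init_iff p).mp hpi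
        refine ⟨⟨hpl, hpX⟩, ?_⟩
        intro t ht hpf
        exact hmin t ht.1 (Multiset.mem_filter.mp hpf).1
      · rintro ⟨⟨hpl, hpX⟩, hmin⟩
        refine Multiset.mem_filter.mpr ⟨?_, hpX⟩
        refine (h.init_iff p).mpr ⟨hpl, ?_⟩
        intro t ht hpt
        have hflow : N.flow (Sum.inr t) (Sum.inl p) := ⟨hpl, ht, hpt⟩
        obtain ⟨s, hs, hle⟩ := hpX
        have htX : Sum.inr t ∈ X := ⟨s, hs, Relation.ReflTransGen.head hflow hle⟩
        exact hmin t ⟨ht, htX⟩ (Multiset.mem_filter.mpr ⟨hpt, ⟨s, hs, hle⟩⟩)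
  · -- (N ↾ C⁺)[C] is an occurrence net
    refine SNet.isOccurrence_restrict h Y ?_ ?_ _ hfin.toFinset.nodup ?_
    · -- pre: last step of path from C
      intro t ht htY
      obtain ⟨s, hs, hle⟩ := htY
      rcases Relation.ReflTransGen.cases_tail hle with heq | ⟨z, hz1, hz2⟩
      · simp at heq
      · cases z with
        | inl p => exact ⟨p, hz2.2.2, s, hs, hz1⟩
        | inr t' => exact hz2.elim
    · -- post: Y up-closed
      intro t ht htY
      obtain ⟨p, hp⟩ := Multiset.exists_mem_of_ne_zero (h.post_ne t ht)
      obtain ⟨s, hs, hle⟩ := htY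
      refine ⟨p, hp, s, hs, hle.tail ?_⟩
      exact ⟨h.post_sub t ht p hp, ht, hp⟩
    · -- init_iff for C⁺ with marking C
      intro p
      rw [show (p ∈ hfin.toFinset.val) = (p ∈ hfin.toFinset) from rfl,
        Set.Finite.mem_toFinset]
      constructor
      · intro hp
        refine ⟨⟨hC.1 hp, p, hp, Relation.ReflTransGen.refl⟩, ?_⟩
        intro t ht hpf
        obtain ⟨hpt, hpY⟩ := Multiset.mem_filter.mp hpf
        obtain ⟨s, hs, hle⟩ := ht.2
        have hflow : N.flow (Sum.inr t) (Sum.inl p) := ⟨hC.1 hp, ht.1, hpt⟩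
        by_cases hsp : s = p
        · subst hsp
          exact SNet.no_cycle h (Relation.TransGen.tail' hle hflow)
        · exact (hC.2.1 s hs p hp hsp).1 (hle.tail hflow)
      · rintro ⟨⟨hpl, hpY⟩, hmin⟩
        obtain ⟨s, hs, hle⟩ := hpY
        rcases Relation.ReflTransGen.cases_tail hle with heq | ⟨z, hz1, hz2⟩
        · obtain rfl : p = s := by simpa using heq
          exact hs
        · exfalso
          cases z with
          | inl q => exact hz2.elim
          | inr t =>
            obtain ⟨_, ht, hpt⟩ := hz2
            have htY : Sum.inr t ∈ Y := ⟨s, hs, hz1⟩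
            exact hmin t ⟨ht, htY⟩
              (Multiset.mem_filter.mpr ⟨hpt, ⟨s, hs, hle⟩⟩)
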